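/- For all real numbers c, d with -1 < c < 1 and -1 < d < 1, the polynomial f(c,d) = c^2 + d^2 - 2c^2 d^2 + c^3 d - c d^3 satisfies f(c,d) ≥ 0, with equality if and only if c = 0 and d = 0. -/
import Mathlib


noncomputable def f (c d : ℝ) : ℝ := c^2 + d^2 - 2*c^2*d^2 + c^3*d - c*d^3

theorem stmt_0 (c d : ℝ) (hc1 : -1 < c) (hc2 : c < 1) (hd1 : -1 < d) (hd2 : d < 1) :
    0 ≤ f c d ∧ (f c d = 0 ↔ c = 0 ∧ d = 0) := by
  unfold f
  have p1 : 0 < 1 - c^2 := by nlinarith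
  have p2 : 0 < 1 - d^2 := by nlinarith
  constructor
  · nlinarith [mul_nonneg p1.le (sq_nonneg (c*d)), mul_nonneg p2.le (sq_nonneg (c*d)),
      sq_nonneg (c*d*(c+d)), sq_nonneg (c*d*(c-d)), sq_nonneg (c+d), sq_nonneg (c-d),
      sq_nonneg (c^2-d^2), sq_nonneg (c*d), mul_nonneg p1.le p2.le,
      mul_nonneg (mul_nonneg p1.le p2.le) (sq_nonneg (c+d)),
      mul_nonneg (mul_nonneg p1.le p2.le) (sq_nonneg (c-d))]
  · constructor
    · intro h
      constructor
      · by_contra hcne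
        have hc : 0 < c^2 := by positivity
        nlinarith [mul_nonneg p1.le (sq_nonneg (c*d)), mul_nonneg p2.le (sq_nonneg (c*d)),
          sq_nonneg (c*d*(c+d)), sq_nonneg (c*d*(c-d)), sq_nonneg (c+d), sq_nonneg (c-d),
          sq_nonneg (c^2-d^2), sq_nonneg (c*d), mul_nonneg p1.le p2.le,
          mul_pos p1 hc, mul_pos p2 hc, mul_pos (mul_pos p1 p2) hc,
          mul_nonneg (mul_nonneg p1.le p2.le) (sq_nonneg (c+d)),
          mul_nonneg (mul_nonneg p1.le p2.le) (sq_nonneg (c-d))]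
      · by_contra hdne
        have hd : 0 < d^2 := by positivity
        nlinarith [mul_nonneg p1.le (sq_nonneg (c*d)), mul_nonneg p2.le (sq_nonneg (c*d)),
          sq_nonneg (c*d*(c+d)), sq_nonneg (c*d*(c-d)), sq_nonneg (c+d), sq_nonneg (c-d),
          sq_nonneg (c^2-d^2), sq_nonneg (c*d), mul_nonneg p1.le p2.le,
          mul_pos p1 hd, mul_pos p2 hd, mul_pos (mul_pos p1 p2) hd,
          mul_nonneg (mul_nonneg p1.le p2.le) (sq_nonneg (c+d)),
          mul_nonneg (mul_nonneg p1.le p2.le) (sq_nonneg (c-d))]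
    · rintro ⟨rfl, rfl⟩; ring
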